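/- arXiv:0711.2296 — 5 statements merged into one kernel-verified Lean document; each statement's English description precedes it below -/
import Mathlib

section
/- Let f(z) be a polynomial, let m_1,...,m_N be non-negative integers, and let R(z) = f(z)/∏_{j=1}^N (1 - z^j)^{m_j}. Suppose all coefficients of the Taylor expansion of R(z) at z = 0 are non-negative, and R(z) has a removable singularity at z = 1 (i.e., (1-z)^M divides f(z), where M = ∑_j m_j). Then R(z) is a polynomial. -/
/-!
Writing `1 - z^j = (1 - z)(1 + z + ⋯ + z^{j-1})` and cancelling `(1 - z)^M` against `f = (1 - z)^M g`
gives `g = R Q` with `Q = ∏_j (1 + z + ⋯ + z^{j-1})^{m_j}`. Both `R` and `Q` have non-negative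
coefficients and `Q(0) = 1`, so for `n > deg g` the vanishing coefficient
`0 = [z^n] g = ∑_{a+b=n} r_a q_b` forces `r_n = r_n q_0 = 0`.
-/

open Polynomial Finset

namespace Polynomial

def nonnegCoeffs (K : Type*) [Semiring K] [PartialOrder K] [IsOrderedRing K] :
    Subsemiring K[X] where
  carrier := {p | ∀ n, 0 ≤ p.coeff n}
  mul_mem' {p q} hp hq n := by
    rw [coeff_mul]
    exact sum_nonneg fun x _ => mul_nonneg (hp x.1) (hq x.2)
  one_mem' n := by
    rw [coeff_one]
    split_ifs <;> simp
  add_mem' {p q} hp hq n := by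
    rw [coeff_add]
    exact add_nonneg (hp n) (hq n)
  zero_mem' n := by simp

variable {K : Type*} [Semiring K] [PartialOrder K] [IsOrderedRing K]

theorem X_mem_nonnegCoeffs : (X : K[X]) ∈ nonnegCoeffs K := fun n => by
  rw [coeff_X]
  split_ifs <;> simp

theorem geom_sum_X_mem_nonnegCoeffs (j : ℕ) :
    ∑ i ∈ range j, (X : K[X]) ^ i ∈ nonnegCoeffs K :=
  Subsemiring.sum_mem _ fun i _ => pow_mem X_mem_nonnegCoeffs i

end Polynomial

theorem Finset.prod_one_sub_pow_pow {R : Type*} [CommRing R] (s : Finset ℕ) (x : R) (m : ℕ → ℕ) :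
    ∏ j ∈ s, (1 - x ^ j) ^ m j =
      (1 - x) ^ (∑ j ∈ s, m j) * ∏ j ∈ s, (∑ i ∈ range j, x ^ i) ^ m j := by
  rw [← prod_pow_eq_pow_sum, ← prod_mul_distrib]
  exact prod_congr rfl fun j _ => by rw [← mul_pow, mul_neg_geom_sum]

theorem Polynomial.coeff_zero_prod_geom_sum_X_pow {R : Type*} [CommRing R] {s : Finset ℕ}
    (hs : 0 ∉ s) (m : ℕ → ℕ) :
    (∏ j ∈ s, (∑ i ∈ range j, (X : R[X]) ^ i) ^ m j).coeff 0 = 1 := by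
  rw [← constantCoeff_apply, map_prod]
  refine prod_eq_one fun j hj => ?_
  simp only [map_pow, map_sum, constantCoeff_apply, coeff_X_zero, zero_geom_sum,
    if_neg (ne_of_mem_of_not_mem hj hs), one_pow]

namespace PowerSeries

variable {K : Type*} [CommSemiring K] [PartialOrder K] [IsOrderedRing K] [NoZeroDivisors K]
  {R Q : PowerSeries K} {g : K[X]}

theorem coeff_eq_zero_of_coe_eq_mul_of_nonneg (hg : (g : PowerSeries K) = R * Q)
    (hR : ∀ n, 0 ≤ coeff n R) (hQ : ∀ n, 0 ≤ coeff n Q) (hQ0 : constantCoeff Q ≠ 0)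
    {n : ℕ} (hn : g.natDegree < n) : coeff n R = 0 := by
  have hsum := congrArg (coeff n) hg
  rw [Polynomial.coeff_coe, coeff_eq_zero_of_natDegree_lt hn, coeff_mul, eq_comm,
    sum_eq_zero_iff_of_nonneg fun p _ => mul_nonneg (hR p.1) (hQ p.2)] at hsum
  have hn0 := hsum (n, 0) (by simp)
  rw [coeff_zero_eq_constantCoeff_apply] at hn0
  exact (mul_eq_zero.mp hn0).resolve_right hQ0

theorem exists_eq_coe_of_coe_eq_mul_of_nonneg (hg : (g : PowerSeries K) = R * Q)
    (hR : ∀ n, 0 ≤ coeff n R) (hQ : ∀ n, 0 ≤ coeff n Q) (hQ0 : constantCoeff Q ≠ 0) :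
    ∃ P : K[X], R = P := by
  refine ⟨R.trunc (g.natDegree + 1), ext fun n => ?_⟩
  rw [Polynomial.coeff_coe, coeff_trunc]
  split_ifs with hn
  · rfl
  · exact coeff_eq_zero_of_coe_eq_mul_of_nonneg hg hR hQ hQ0 (by omega)

end PowerSeries

/-- Lemma 2.14 of Kac–Wakimoto, "On rationality of W-algebras":
if `R(z) = f(z) / ∏_{j=1}^N (1 - z^j)^{m_j}` has non-negative Taylor coefficients at `z = 0`
and `(1-z)^M` divides `f`, where `M = ∑_j m_j` (removable singularity at `z = 1`),
then `R` is a polynomial. -/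
theorem stmt0 (N : ℕ) (f : Polynomial ℝ) (m : ℕ → ℕ) (R : PowerSeries ℝ)
    (hR : (f : PowerSeries ℝ) =
      R * ((∏ j ∈ Finset.Icc 1 N, (1 - Polynomial.X ^ j) ^ m j : Polynomial ℝ) : PowerSeries ℝ))
    (hnonneg : ∀ n, 0 ≤ PowerSeries.coeff n R)
    (hdiv : ((1 - Polynomial.X) ^ (∑ j ∈ Finset.Icc 1 N, m j) : Polynomial ℝ) ∣ f) :
    ∃ P : Polynomial ℝ, R = (P : PowerSeries ℝ) := by
  set Q : ℝ[X] := ∏ j ∈ Icc 1 N, (∑ i ∈ range j, (X : ℝ[X]) ^ i) ^ m j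
  obtain ⟨g, rfl⟩ := hdiv
  rw [prod_one_sub_pow_pow] at hR
  have hone_sub_X : ((1 - X : ℝ[X]) : PowerSeries ℝ) ≠ 0 := fun h => by
    simpa using congrArg PowerSeries.constantCoeff h
  have hgRQ : (g : PowerSeries ℝ) = R * Q := by
    refine mul_left_cancel₀ (pow_ne_zero (∑ j ∈ Icc 1 N, m j) hone_sub_X) ?_
    push_cast at hR ⊢
    rw [hR]
    ring
  have hQ : Q ∈ nonnegCoeffs ℝ :=
    Subsemiring.prod_mem _ fun j _ => pow_mem (geom_sum_X_mem_nonnegCoeffs j) _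
  have hQ0 : Q.coeff 0 = 1 := coeff_zero_prod_geom_sum_X_pow (by simp) m
  refine PowerSeries.exists_eq_coe_of_coe_eq_mul_of_nonneg hgRQ hnonneg
    (fun n => by simpa only [Polynomial.coeff_coe] using hQ n) ?_
  simp [Polynomial.constantCoeff_coe, hQ0]
end

section
/- Let f(z) = f₁(z)·(1-z)^M and g(z) = g₁(z)·(1-z)^M be polynomials, where g₁ has non-negative coefficients and g₁(0) ≠ 0. If the formal power series f(z)/g(z) has non-negative coefficients, then f(z)/g(z) is a polynomial, i.e. g₁(z) divides f₁(z) and f₁(z) = (f/g)(z) · g₁(z). -/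
/-- Lemma 2.13-style cancellation (proof of Lemma 2.14 in Kac–Wakimoto):
let `f = f₁·(1-z)^M`, `g = g₁·(1-z)^M` be polynomials with `g₁` having non-negative
coefficients and `g₁(0) ≠ 0`.  If the formal power series `R = f/g = f₁/g₁`
(characterized by `f₁ = R·g₁`) has non-negative coefficients, then `R` is a polynomial. -/
theorem stmt1 (M : ℕ) (f g f₁ g₁ : Polynomial ℝ)
    (hf : f = f₁ * (1 - Polynomial.X) ^ M)
    (hg : g = g₁ * (1 - Polynomial.X) ^ M)
    (hg₁pos : ∀ n, 0 ≤ g₁.coeff n)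
    (hg₁0 : g₁.coeff 0 ≠ 0)
    (R : PowerSeries ℝ)
    (hdiv : (f₁ : PowerSeries ℝ) = R * (g₁ : PowerSeries ℝ))
    (hRpos : ∀ n, 0 ≤ PowerSeries.coeff n R) :
    ∃ P : Polynomial ℝ, R = (P : PowerSeries ℝ) := by
  set N := f₁.natDegree + 1
  have hvan : ∀ n, N ≤ n → PowerSeries.coeff n R = 0 := by
    intro n hn
    have hf0 : f₁.coeff n = 0 := by
      apply Polynomial.coeff_eq_zero_of_natDegree_lt
      omega
    have hsum : ∑ p ∈ Finset.HasAntidiagonal.antidiagonal n,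
        PowerSeries.coeff p.1 R * g₁.coeff p.2 = 0 := by
      have := congrArg (PowerSeries.coeff n) hdiv
      rw [Polynomial.coeff_coe, PowerSeries.coeff_mul] at this
      simp only [Polynomial.coeff_coe] at this
      rw [hf0] at this
      exact this.symm
    have hterm : PowerSeries.coeff n R * g₁.coeff 0 = 0 := by
      have hmem : ((n, 0) : ℕ × ℕ) ∈ Finset.HasAntidiagonal.antidiagonal n := by simp
      have := (Finset.sum_eq_zero_iff_of_nonneg (fun p _ =>
        mul_nonneg (hRpos p.1) (hg₁pos p.2))).mp hsum (n, 0) hmem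
      exact this
    rcases mul_eq_zero.mp hterm with h | h
    · exact h
    · exact absurd h hg₁0
  refine ⟨PowerSeries.trunc N R, ?_⟩
  ext n
  rw [Polynomial.coeff_coe, PowerSeries.coeff_trunc]
  split_ifs with h
  · rfl
  · exact hvan n (le_of_not_gt h)
end

section
/- Let Δ be the root system of sl_n realized in the diagonal Cartan subalgebra h, let f be a nilpotent element with partition m₁ ≥ ... ≥ m_s of n, largest part m = m₁, realized in Jordan form so that h^f ⊂ h. If Φ ⊂ Δ is a root subsystem with Φ ∩ Δ^f = ∅ (where Δ^f = {α ∈ Δ : α|_{h^f} = 0}), then rank Φ ≤ n - m. -/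
/-!
Join `i ~ j` when `ε_i - ε_j ∈ Φ`. Closure of `Φ` under negation and root sums makes `~` an
equivalence relation, and every root of `Φ` lies in the kernel of the map summing the
coordinates of a vector over each `~`-class. Since `Φ` avoids `Δ^f`, the `m` indices of a
longest row of the diagram lie in pairwise different classes, so this map, followed by
restriction to that row, is onto a space of dimension `m`; hence `rank Φ ≤ n - m`.
-/

open Finset Module

theorem LinearMap.finrank_add_finrank_le_of_le_ker {K V W : Type*} [DivisionRing K]
    [AddCommGroup V] [Module K V] [FiniteDimensional K V] [AddCommGroup W] [Module K W]
    {L : V →ₗ[K] W} (hL : Function.Surjective L) {p : Submodule K V} (hp : p ≤ ker L) :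
    finrank K p + finrank K W ≤ finrank K V := by
  have := L.finrank_range_add_finrank_ker
  rw [range_eq_top.mpr hL, finrank_top] at this
  have := Submodule.finrank_mono hp
  omega

namespace SlRoots

variable {ι K : Type*} [DecidableEq ι] [Field K]

variable (ι K) in
def roots : Set (ι → K) := {v | ∃ i j : ι, i ≠ j ∧ v = Pi.single i 1 - Pi.single j 1}

def Linked (Φ : Set (ι → K)) (i j : ι) : Prop :=
  i = j ∨ (Pi.single i 1 - Pi.single j 1 : ι → K) ∈ Φ

variable {Φ : Set (ι → K)}

theorem Linked.symm (hneg : ∀ v ∈ Φ, -v ∈ Φ) {i j : ι} : Linked Φ i j → Linked Φ j i := by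
  rintro (rfl | h)
  · exact Or.inl rfl
  · exact Or.inr (by simpa using hneg _ h)

theorem Linked.trans (hadd : ∀ v w, v ∈ Φ → w ∈ Φ → v + w ∈ roots ι K → v + w ∈ Φ)
    {i j k : ι} : Linked Φ i j → Linked Φ j k → Linked Φ i k := by
  rintro (rfl | hij) (rfl | hjk)
  · exact Or.inl rfl
  · exact Or.inr hjk
  · exact Or.inr hij
  · by_cases hik : i = k
    · exact Or.inl hik
    · have := hadd _ _ hij hjk ⟨i, k, hik, sub_add_sub_cancel _ _ _⟩
      exact Or.inr (by rwa [sub_add_sub_cancel] at this)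

variable [Fintype ι]

open Classical in
noncomputable def classSum (Φ : Set (ι → K)) : (ι → K) →ₗ[K] ι → K where
  toFun v x := ∑ i ∈ univ.filter (Linked Φ x), v i
  map_add' v w := by funext x; simp [sum_add_distrib]
  map_smul' c v := by funext x; simp [mul_sum]

open Classical in
theorem classSum_apply (v : ι → K) (x : ι) :
    classSum Φ v x = ∑ i ∈ univ.filter (Linked Φ x), v i := rfl

open Classical in
theorem classSum_single (x i : ι) :
    classSum Φ (Pi.single i 1) x = if Linked Φ x i then 1 else 0 := by
  simp [classSum_apply, Pi.single_apply]

theorem span_le_ker_classSum (hΦ : Φ ⊆ roots ι K) (hneg : ∀ v ∈ Φ, -v ∈ Φ)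
    (hadd : ∀ v w, v ∈ Φ → w ∈ Φ → v + w ∈ roots ι K → v + w ∈ Φ) :
    Submodule.span K Φ ≤ LinearMap.ker (classSum Φ) := by
  classical
  refine Submodule.span_le.mpr fun v hv => ?_
  obtain ⟨i, j, -, rfl⟩ := hΦ hv
  have hij : Linked Φ i j := Or.inr hv
  have hclass (x : ι) : Linked Φ x i ↔ Linked Φ x j :=
    ⟨fun h => h.trans hadd hij, fun h => h.trans hadd (hij.symm hneg)⟩
  ext x
  rw [map_sub, Pi.sub_apply, classSum_single, classSum_single, if_congr (hclass x) rfl rfl,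
    sub_self]
  rfl

theorem surjective_funLeft_comp_classSum {B : Set ι}
    (hB : B.Pairwise fun x y => ¬ Linked Φ x y) :
    Function.Surjective (LinearMap.funLeft K K ((↑) : B → ι) ∘ₗ classSum Φ) := by
  classical
  intro w
  -- extend `w` by zero: the class of `y ∈ B` meets `B` only in `y`
  refine ⟨fun i => if h : i ∈ B then w ⟨i, h⟩ else 0, funext fun y => ?_⟩
  rw [LinearMap.comp_apply, LinearMap.funLeft_apply, classSum_apply,
    sum_eq_single (y : ι)]
  · simp
  · intro i hi hiy
    have hyi : Linked Φ y i := (mem_filter.mp hi).2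
    by_cases h : i ∈ B
    · exact absurd hyi (hB y.2 h (Ne.symm hiy))
    · simp [h]
  · intro hy
    exact (hy (mem_filter.mpr ⟨mem_univ _, Or.inl rfl⟩)).elim

theorem finrank_span_add_card_le (hΦ : Φ ⊆ roots ι K) (hneg : ∀ v ∈ Φ, -v ∈ Φ)
    (hadd : ∀ v w, v ∈ Φ → w ∈ Φ → v + w ∈ roots ι K → v + w ∈ Φ) {B : Finset ι}
    (hB : (B : Set ι).Pairwise fun x y => ¬ Linked Φ x y) :
    finrank K (Submodule.span K Φ) + B.card ≤ Fintype.card ι := by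
  have := LinearMap.finrank_add_finrank_le_of_le_ker (surjective_funLeft_comp_classSum hB)
    ((span_le_ker_classSum hΦ hneg hadd).trans (LinearMap.ker_le_ker_comp _ _))
  simpa using this

end SlRoots

open SlRoots in
/-- `b` assigns each index to its row of the Young diagram of `f`, so `Δ^f` is the set of roots
`ε_i - ε_j` with `b i = b j`. -/
theorem stmt6_general (n s : ℕ) (b : Fin n → Fin s)
    (m : ℕ)
    (hmax : ∃ k : Fin s, (Finset.univ.filter fun i => b i = k).card = m)
    (Φ : Set (Fin n → ℚ))
    (hΦ : Φ ⊆ {v | ∃ i j : Fin n, i ≠ j ∧ v = Pi.single i 1 - Pi.single j 1})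
    (hneg : ∀ v ∈ Φ, -v ∈ Φ)
    (hadd : ∀ v w : Fin n → ℚ, v ∈ Φ → w ∈ Φ →
      (v + w) ∈ {v | ∃ i j : Fin n, i ≠ j ∧ v = Pi.single i 1 - Pi.single j 1} → v + w ∈ Φ)
    (hdisj : Φ ∩ {v | ∃ i j : Fin n, i ≠ j ∧ b i = b j ∧
      v = Pi.single i 1 - Pi.single j 1} = ∅) :
    Module.finrank ℚ (Submodule.span ℚ Φ) ≤ n - m := by
  obtain ⟨k, rfl⟩ := hmax
  have hrow : ((univ.filter fun i => b i = k : Finset (Fin n)) : Set (Fin n)).Pairwise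
      fun x y => ¬ Linked Φ x y := by
    intro x hx y hy hxy hlinked
    simp only [coe_filter, mem_univ, true_and] at hx hy
    refine hlinked.elim hxy fun hxyΦ => ?_
    exact (Set.eq_empty_iff_forall_notMem.mp hdisj) _ ⟨hxyΦ, x, y, hxy, hx.trans hy.symm, rfl⟩
  have := finrank_span_add_card_le hΦ hneg hadd hrow
  rw [Fintype.card_fin] at this
  omega

/-- Proposition 3.3(a) (rank bound) of Kac–Wakimoto, in the combinatorial model of
`sl_n`: roots are `ε_i - ε_j` (realized as `Pi.single i 1 - Pi.single j 1` in `Fin n → ℚ`),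
the nilpotent `f` corresponds to a partition of `n` recorded by the block (row) assignment
`b : Fin n → Fin s` whose largest block has size `m`, and `Δ^f` consists of the roots
`ε_i - ε_j` with `b i = b j` (those vanishing on `h^f`).  If `Φ ⊆ Δ \ Δ^f` is a root
subsystem, then `rank Φ ≤ n - m`. -/
theorem stmt6 (n s : ℕ) (hn : 0 < n) (b : Fin n → Fin s)
    (m : ℕ)
    (hm : ∀ k : Fin s, (Finset.univ.filter fun i => b i = k).card ≤ m)
    (hmax : ∃ k : Fin s, (Finset.univ.filter fun i => b i = k).card = m)
    (Φ : Set (Fin n → ℚ))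
    (hΦ : Φ ⊆ {v | ∃ i j : Fin n, i ≠ j ∧ v = Pi.single i 1 - Pi.single j 1})
    (hneg : ∀ v ∈ Φ, -v ∈ Φ)
    (hadd : ∀ v w : Fin n → ℚ, v ∈ Φ → w ∈ Φ →
      (v + w) ∈ {v | ∃ i j : Fin n, i ≠ j ∧ v = Pi.single i 1 - Pi.single j 1} → v + w ∈ Φ)
    (hdisj : Φ ∩ {v | ∃ i j : Fin n, i ≠ j ∧ b i = b j ∧
      v = Pi.single i 1 - Pi.single j 1} = ∅) :
    Module.finrank ℚ (Submodule.span ℚ Φ) ≤ n - m :=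
  stmt6_general n s b m hmax Φ hΦ hneg hadd hdisj
end

section
/- Let g be a simple Lie algebra with Coxeter number h, dual Coxeter number h^∨, highest root θ, and Weyl vector ρ with dual Weyl vector ρ^∨ (so (ρ^∨|θ) = h - 1 and (ρ|θ^∨) = h^∨ - 1). For g = sl_n with f = f_u the nilpotent corresponding to the partition n = u + ⋯ + u + s (0 ≤ s < u, u ≤ n), and p ≥ n an integer coprime to u with p·u·dim g^{f_u} = h^∨·dim g = n·(n²-1), the 'strange formula' generalization holds: |ρ - (p/u)·x|² = (1/12)·(p/u)·(dim g₀ - (1/2) dim g_{1/2}), where x is the semisimple element of an sl₂-triple through f_u and g_j are the ad x eigenspaces. -/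
/-!
Write `t = p / u`. Then `|ρ - t x|² = |ρ|² - 2 t (ρ | x) + t² |x|²`, and since `x` is sorted,
`(ρ | x) = ¼ ∑_{i,j} |x_i - x_j|`. So `x` enters the formula only through
`6 ∑ |x_i - x_j| + dim g₀ - ½ dim g_{1/2}`, and the constraint through
`dim g^f = dim g₀ + dim g_{1/2}`; both are sums of a kernel over pairs of eigenvalues of `x`, whose
multiset is `q` copies of the `sl₂`-string of length `u` and one of length `s`. On a pair of strings
these kernel sums do not depend on the relative parity of the two strings, which gives closed forms
in `q, u, s`. Finally the constraint `p u dim g^f = n (n² - 1)` with `p ≥ n` leaves only `u = 1`,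
the principal nilpotent with `p = u + 1`, and `p = n` with `s ∈ {1, u - 1}`; in each case the
formula is a polynomial identity.
-/

open Finset

namespace StrangeFormula

/-- The weights `(m-1)/2, (m-3)/2, …, -(m-1)/2` of the `m`-dimensional irreducible
`sl₂`-module. -/
def sl2Weights (m : ℕ) : Multiset ℚ := (Multiset.range m).map fun c : ℕ => ((m : ℚ) - 1) / 2 - c

theorem mem_sl2Weights {m : ℕ} {v : ℚ} :
    v ∈ sl2Weights m ↔ ∃ c : ℕ, c < m ∧ v = ((m : ℚ) - 1) / 2 - c := by
  simp only [sl2Weights, Multiset.mem_map, Multiset.mem_range, eq_comm]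

theorem nodup_sl2Weights (m : ℕ) : (sl2Weights m).Nodup :=
  (Multiset.nodup_range m).map fun a b h => by simpa using h

theorem count_sl2Weights (m : ℕ) (v : ℚ) :
    (sl2Weights m).count v = if ∃ c : ℕ, c < m ∧ v = ((m : ℚ) - 1) / 2 - c then 1 else 0 := by
  simp only [Multiset.count_eq_of_nodup (nodup_sl2Weights m), mem_sl2Weights]

theorem card_sl2Weights (m : ℕ) : (sl2Weights m).card = m := by simp [sl2Weights]

theorem sum_map_sl2Weights (m : ℕ) (g : ℚ → ℚ) :
    ((sl2Weights m).map g).sum = ∑ c ∈ range m, g (((m : ℚ) - 1) / 2 - c) := by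
  simp only [sl2Weights, Multiset.map_map, Function.comp_def, Finset.sum_eq_multiset_sum,
    Finset.range_val]

theorem sum_range_natCast (m : ℕ) : ∑ c ∈ range m, (c : ℚ) = m * (m - 1) / 2 := by
  induction m with
  | zero => simp
  | succ m ih => rw [sum_range_succ, ih]; push_cast; ring

theorem sum_range_natCast_sq (m : ℕ) :
    ∑ c ∈ range m, (c : ℚ) ^ 2 = m * (m - 1) * (2 * m - 1) / 6 := by
  induction m with
  | zero => simp
  | succ m ih => rw [sum_range_succ, ih]; push_cast; ring

theorem sum_map_sq_sl2Weights (m : ℕ) :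
    ((sl2Weights m).map (· ^ 2)).sum = m * ((m : ℚ) ^ 2 - 1) / 12 := by
  simp only [sum_map_sl2Weights, sub_sq, sum_add_distrib, sum_sub_distrib, sum_const, card_range,
    nsmul_eq_mul, ← mul_sum, sum_range_natCast, sum_range_natCast_sq]
  ring

theorem mem_sl2Weights_add_two_mul {m : ℕ} {w : ℚ} (hw : w ∈ sl2Weights m) (t : ℕ) :
    w ∈ sl2Weights (m + 2 * t) := by
  obtain ⟨c, hc, rfl⟩ := mem_sl2Weights.1 hw
  exact mem_sl2Weights.2 ⟨c + t, by omega, by push_cast; ring⟩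

theorem add_half_mem_sl2Weights_succ {m : ℕ} {w : ℚ} (hw : w ∈ sl2Weights m) :
    w + 1 / 2 ∈ sl2Weights (m + 1) := by
  obtain ⟨c, hc, rfl⟩ := mem_sl2Weights.1 hw
  exact mem_sl2Weights.2 ⟨c, by omega, by push_cast; ring⟩

theorem sub_half_mem_sl2Weights_succ {m : ℕ} {w : ℚ} (hw : w ∈ sl2Weights m) :
    w - 1 / 2 ∈ sl2Weights (m + 1) := by
  obtain ⟨c, hc, rfl⟩ := mem_sl2Weights.1 hw
  exact mem_sl2Weights.2 ⟨c + 1, by omega, by push_cast; ring⟩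

theorem notMem_sl2Weights_succ {m : ℕ} {w : ℚ} (hw : w ∈ sl2Weights m) :
    w ∉ sl2Weights (m + 1) := by
  obtain ⟨c, -, rfl⟩ := mem_sl2Weights.1 hw
  rintro h
  obtain ⟨c', -, h⟩ := mem_sl2Weights.1 h
  push_cast at h
  have : ((m + 2 * c' : ℕ) : ℚ) = (m + 1 + 2 * c : ℕ) := by push_cast; linarith
  have : m + 2 * c' = m + 1 + 2 * c := by exact_mod_cast this
  omega

theorem add_half_notMem_sl2Weights {m : ℕ} {w : ℚ} (hw : w ∈ sl2Weights m) :
    w + 1 / 2 ∉ sl2Weights m :=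
  fun h => notMem_sl2Weights_succ hw (by simpa using sub_half_mem_sl2Weights_succ h)

theorem sub_half_notMem_sl2Weights {m : ℕ} {w : ℚ} (hw : w ∈ sl2Weights m) :
    w - 1 / 2 ∉ sl2Weights m :=
  fun h => notMem_sl2Weights_succ hw (by simpa using add_half_mem_sl2Weights_succ h)

theorem sum_range_abs_sub {m k : ℕ} {a : ℚ} (hk : k ≤ m) (h₁ : (k : ℚ) - 1 ≤ a) (h₂ : a ≤ k) :
    ∑ c ∈ range m, |(c : ℚ) - a| = m * (m - 1) / 2 - m * a + (2 * k * a - k * (k - 1)) := by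
  have hlow : ∀ c ∈ range k, |(c : ℚ) - a| = a - c := fun c hc => by
    have : (c : ℚ) + 1 ≤ k := by exact_mod_cast mem_range.1 hc
    rw [abs_of_nonpos (by linarith), neg_sub]
  have hhigh : ∀ c ∈ Ico k m, |(c : ℚ) - a| = c - a := fun c hc => by
    have : (k : ℚ) ≤ c := by exact_mod_cast (mem_Ico.1 hc).1
    rw [abs_of_nonneg (by linarith)]
  have hsplit := sum_range_add_sum_Ico (fun c : ℕ => (c : ℚ) - a) hk
  rw [← sum_range_add_sum_Ico _ hk, sum_congr rfl hlow, sum_congr rfl hhigh]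
  simp only [sum_sub_distrib, sum_const, card_range, nsmul_eq_mul, sum_range_natCast] at hsplit ⊢
  linarith

theorem sum_abs_sub_sl2Weights {m : ℕ} {w : ℚ} (hw : w ∈ sl2Weights m) :
    ((sl2Weights m).map fun v => |v - w|).sum = ((m : ℚ) ^ 2 - 1) / 4 + w ^ 2 := by
  obtain ⟨k, hk, rfl⟩ := mem_sl2Weights.1 hw
  have h : ∀ c ∈ range m, |((m : ℚ) - 1) / 2 - c - (((m : ℚ) - 1) / 2 - k)| = |(c : ℚ) - k| :=
    fun c _ => by rw [← abs_neg]; ring_nf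
  rw [sum_map_sl2Weights, sum_congr rfl h, sum_range_abs_sub hk.le (by linarith) le_rfl]
  ring

theorem sum_abs_sub_sl2Weights_succ {m : ℕ} {w : ℚ} (hw : w ∈ sl2Weights m) :
    ((sl2Weights (m + 1)).map fun v => |v - w|).sum = ((m : ℚ) + 1) ^ 2 / 4 + w ^ 2 := by
  obtain ⟨k, hk, rfl⟩ := mem_sl2Weights.1 hw
  have h : ∀ c ∈ range (m + 1),
      |(((m + 1 : ℕ) : ℚ) - 1) / 2 - c - (((m : ℚ) - 1) / 2 - k)| = |(c : ℚ) - (k + 1 / 2)| :=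
    fun c _ => by rw [← abs_neg]; push_cast; ring_nf
  rw [sum_map_sl2Weights, sum_congr rfl h,
    sum_range_abs_sub (k := k + 1) (by omega) (by push_cast; linarith) (by push_cast; linarith)]
  push_cast
  ring

def strangeKernel (v w : ℚ) : ℚ :=
  6 * |v - w| + (if v = w then 1 else 0) - (if v - w = 1 / 2 then 1 else 0) / 2

def centralizerKernel (v w : ℚ) : ℚ := (if v = w then 1 else 0) + (if v - w = 1 / 2 then 1 else 0)

def symmetrize (K : ℚ → ℚ → ℚ) (v w : ℚ) : ℚ := K v w + K w v

theorem symmetrize_comm (K : ℚ → ℚ → ℚ) (v w : ℚ) : symmetrize K v w = symmetrize K w v :=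
  add_comm _ _

theorem sum_map_ite_eq_count (M : Multiset ℚ) (a : ℚ) :
    (M.map fun v => if v = a then (1 : ℚ) else 0).sum = M.count a := by
  induction M using Multiset.induction_on with
  | empty => simp
  | cons b M ih =>
    rcases eq_or_ne b a with rfl | h
    · simp [ih, add_comm]
    · simp [ih, h, h.symm]

theorem sum_map_symmetrize_strangeKernel (M : Multiset ℚ) (w : ℚ) :
    (M.map (symmetrize strangeKernel w)).sum =
      12 * (M.map fun v => |v - w|).sum + 2 * M.count w
        - (M.count (w + 1 / 2) + M.count (w - 1 / 2)) / 2 := by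
  have h : ∀ v, symmetrize strangeKernel w v = 12 * |v - w| + 2 * (if v = w then 1 else 0)
      - ((if v = w + 1 / 2 then 1 else 0) + (if v = w - 1 / 2 then 1 else 0)) / 2 := fun v => by
    simp only [symmetrize, strangeKernel, abs_sub_comm w v, eq_comm (a := w),
      sub_eq_iff_eq_add, eq_sub_iff_add_eq, add_comm (1 / 2 : ℚ)]
    ring
  simp only [h, Multiset.sum_map_sub, Multiset.sum_map_add, Multiset.sum_map_mul_left,
    Multiset.sum_map_div, sum_map_ite_eq_count]

theorem sum_map_symmetrize_centralizerKernel (M : Multiset ℚ) (w : ℚ) :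
    (M.map (symmetrize centralizerKernel w)).sum =
      2 * M.count w + M.count (w + 1 / 2) + M.count (w - 1 / 2) := by
  have h : ∀ v, symmetrize centralizerKernel w v = 2 * (if v = w then 1 else 0)
      + (if v = w + 1 / 2 then 1 else 0) + (if v = w - 1 / 2 then 1 else 0) := fun v => by
    simp only [symmetrize, centralizerKernel, eq_comm (a := w),
      sub_eq_iff_eq_add, eq_sub_iff_add_eq, add_comm (1 / 2 : ℚ)]
    ring
  simp only [h, Multiset.sum_map_add, Multiset.sum_map_mul_left, sum_map_ite_eq_count]

/-- Both sums are independent of the relative parity of `s` and `u`, although the individual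
terms (distance sum, multiplicities of `w` and `w ± 1/2`) are not. -/
theorem sum_map_symmetrize_sl2Weights {s u : ℕ} (hsu : s ≤ u) {w : ℚ} (hw : w ∈ sl2Weights s) :
    ((sl2Weights u).map (symmetrize strangeKernel w)).sum = 3 * u ^ 2 - 1 + 12 * w ^ 2 ∧
      ((sl2Weights u).map (symmetrize centralizerKernel w)).sum = 2 := by
  rw [sum_map_symmetrize_strangeKernel, sum_map_symmetrize_centralizerKernel]
  have hnd := nodup_sl2Weights
  obtain ⟨t, ht | ht⟩ := Nat.even_or_odd' (u - s)
  · obtain rfl : u = s + 2 * t := by omega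
    have hw' := mem_sl2Weights_add_two_mul hw t
    rw [sum_abs_sub_sl2Weights hw', Multiset.count_eq_one_of_mem (hnd _) hw',
      Multiset.count_eq_zero.2 (add_half_notMem_sl2Weights hw'),
      Multiset.count_eq_zero.2 (sub_half_notMem_sl2Weights hw')]
    constructor <;> ring
  · obtain rfl : u = s + 2 * t + 1 := by omega
    have hw' := mem_sl2Weights_add_two_mul hw t
    rw [sum_abs_sub_sl2Weights_succ hw', Multiset.count_eq_zero.2 (notMem_sl2Weights_succ hw'),
      Multiset.count_eq_one_of_mem (hnd _) (add_half_mem_sl2Weights_succ hw'),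
      Multiset.count_eq_one_of_mem (hnd _) (sub_half_mem_sl2Weights_succ hw')]
    push_cast
    constructor <;> ring

def pairSum (K : ℚ → ℚ → ℚ) (M N : Multiset ℚ) : ℚ := (M.map fun v => (N.map (K v)).sum).sum

theorem pairSum_comm {K : ℚ → ℚ → ℚ} (hK : ∀ v w, K v w = K w v) (M N : Multiset ℚ) :
    pairSum K M N = pairSum K N M := by
  simp only [pairSum]
  rw [Multiset.sum_map_sum_map]
  simp only [hK]

theorem pairSum_nsmul_add {K : ℚ → ℚ → ℚ} (hK : ∀ v w, K v w = K w v) (q : ℕ)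
    (A B : Multiset ℚ) :
    pairSum K (q • A + B) (q • A + B) =
      q ^ 2 * pairSum K A A + 2 * q * pairSum K B A + pairSum K B B := by
  have := pairSum_comm hK A B
  simp only [pairSum, Multiset.map_add, Multiset.map_nsmul, Multiset.sum_add, Multiset.sum_nsmul,
    Multiset.sum_map_add, nsmul_eq_mul, Multiset.sum_map_mul_left] at this ⊢
  rw [this]
  ring

theorem pairSum_sl2Weights {K : ℚ → ℚ → ℚ} {s u : ℕ} {a b : ℚ}
    (h : ∀ w ∈ sl2Weights s, ((sl2Weights u).map (K w)).sum = a + b * w ^ 2) :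
    pairSum K (sl2Weights s) (sl2Weights u) = s * a + b * (s * ((s : ℚ) ^ 2 - 1) / 12) := by
  rw [pairSum, Multiset.map_congr rfl h, Multiset.sum_map_add, Multiset.sum_map_mul_left,
    sum_map_sq_sl2Weights, Multiset.map_const', Multiset.sum_replicate, card_sl2Weights,
    nsmul_eq_mul]

section Eigenvalues

variable {n : ℕ} (x : Fin n → ℚ)

theorem map_univ_eq_of_card_filter {q u s : ℕ}
    (hx : ∀ v : ℚ, (univ.filter fun i => x i = v).card =
      q * (if ∃ c : ℕ, c < u ∧ v = ((u : ℚ) - 1) / 2 - c then 1 else 0) +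
        (if ∃ c : ℕ, c < s ∧ v = ((s : ℚ) - 1) / 2 - c then 1 else 0)) :
    univ.val.map x = q • sl2Weights u + sl2Weights s := by
  ext v
  rw [Multiset.count_map, Multiset.count_add, Multiset.count_nsmul, count_sl2Weights,
    count_sl2Weights, ← hx, Finset.card_def, Finset.filter_val]
  simp only [eq_comm]

theorem sum_comp_eq_sum_map (g : ℚ → ℚ) : ∑ i, g (x i) = ((univ.val.map x).map g).sum := by
  rw [Multiset.map_map, Finset.sum_eq_multiset_sum, Function.comp_def]

theorem sum_sum_eq_pairSum (K : ℚ → ℚ → ℚ) :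
    ∑ i, ∑ j, K (x i) (x j) = pairSum K (univ.val.map x) (univ.val.map x) := by
  simp only [pairSum, Finset.sum_eq_multiset_sum, Multiset.map_map, Function.comp_def]

theorem sum_sum_eq_pairSum_symmetrize (K : ℚ → ℚ → ℚ) :
    ∑ i, ∑ j, K (x i) (x j) = pairSum (symmetrize K) (univ.val.map x) (univ.val.map x) / 2 := by
  rw [← sum_sum_eq_pairSum]
  simp only [symmetrize, sum_add_distrib]
  rw [sum_comm (f := fun i j => K (x j) (x i))]
  ring

theorem card_filter_pair_eq_sum_sum (P : ℚ → ℚ → Prop) [DecidableRel P] :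
    ((univ.filter fun ij : Fin n × Fin n => P (x ij.1) (x ij.2)).card : ℚ) =
      ∑ i, ∑ j, if P (x i) (x j) then 1 else 0 := by
  rw [← sum_boole, Fintype.sum_prod_type]

theorem sum_sum_strangeKernel_eq_abs_add_card :
    ∑ i, ∑ j, strangeKernel (x i) (x j) = 6 * ∑ i, ∑ j, |x i - x j|
      + (univ.filter fun ij : Fin n × Fin n => x ij.1 = x ij.2).card
      - (univ.filter fun ij : Fin n × Fin n => x ij.1 - x ij.2 = 1 / 2).card / 2 := by
  rw [card_filter_pair_eq_sum_sum x (· = ·),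
    card_filter_pair_eq_sum_sum x (fun a b => a - b = 1 / 2)]
  simp only [strangeKernel, sum_add_distrib, sum_sub_distrib, mul_sum, sum_div]

theorem sum_sum_centralizerKernel_eq_card :
    ∑ i, ∑ j, centralizerKernel (x i) (x j) =
      (univ.filter fun ij : Fin n × Fin n => x ij.1 = x ij.2).card
      + (univ.filter fun ij : Fin n × Fin n => x ij.1 - x ij.2 = 1 / 2).card := by
  rw [card_filter_pair_eq_sum_sum x (· = ·),
    card_filter_pair_eq_sum_sum x (fun a b => a - b = 1 / 2)]
  simp only [centralizerKernel, sum_add_distrib]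

variable {x} {q u s : ℕ} (hW : univ.val.map x = q • sl2Weights u + sl2Weights s)
include hW

theorem sum_sq_of_map_univ_eq :
    ∑ i, x i ^ 2 = (q * u * ((u : ℚ) ^ 2 - 1) + s * ((s : ℚ) ^ 2 - 1)) / 12 := by
  rw [sum_comp_eq_sum_map x (· ^ 2), hW, Multiset.map_add, Multiset.map_nsmul, Multiset.sum_add,
    Multiset.sum_nsmul, sum_map_sq_sl2Weights, sum_map_sq_sl2Weights, nsmul_eq_mul]
  ring

theorem sum_sum_strangeKernel_of_map_univ_eq (hsu : s ≤ u) :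
    ∑ i, ∑ j, strangeKernel (x i) (x j) =
      q ^ 2 * u * (2 * u ^ 2 - 1) + q * s * (3 * u ^ 2 + s ^ 2 - 2) + s * (2 * s ^ 2 - 1) := by
  rw [sum_sum_eq_pairSum_symmetrize, hW, pairSum_nsmul_add (symmetrize_comm _),
    pairSum_sl2Weights fun w hw => (sum_map_symmetrize_sl2Weights le_rfl hw).1,
    pairSum_sl2Weights fun w hw => (sum_map_symmetrize_sl2Weights hsu hw).1,
    pairSum_sl2Weights fun w hw => (sum_map_symmetrize_sl2Weights le_rfl hw).1]
  ring

theorem sum_sum_centralizerKernel_of_map_univ_eq (hsu : s ≤ u) :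
    ∑ i, ∑ j, centralizerKernel (x i) (x j) = q ^ 2 * u + 2 * q * s + s := by
  have h : ∀ {s u : ℕ}, s ≤ u → ∀ w ∈ sl2Weights s,
      ((sl2Weights u).map (symmetrize centralizerKernel w)).sum = 2 + 0 * w ^ 2 :=
    fun hsu w hw => by rw [(sum_map_symmetrize_sl2Weights hsu hw).2]; ring
  rw [sum_sum_eq_pairSum_symmetrize, hW, pairSum_nsmul_add (symmetrize_comm _),
    pairSum_sl2Weights (h le_rfl), pairSum_sl2Weights (h hsu), pairSum_sl2Weights (h le_rfl)]
  ring

end Eigenvalues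

theorem sum_sum_ite_lt_sub {n : ℕ} (x : Fin n → ℚ) :
    ∑ i, ∑ j, (if i < j then x i - x j else 0) = ∑ i : Fin n, ((n : ℚ) - 1 - 2 * i) * x i := by
  have hsplit : ∀ i j : Fin n, (if i < j then x i - x j else 0) =
      (if i < j then x i else 0) - (if i < j then x j else 0) := fun i j => by
    split_ifs <;> ring
  have hIoi : ∀ i : Fin n, ∑ j, (if i < j then x i else 0) = ((n : ℚ) - 1 - i) * x i := fun i => by
    rw [← sum_filter, filter_lt_eq_Ioi, sum_const, Fin.card_Ioi, nsmul_eq_mul, Nat.sub_sub,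
      Nat.cast_sub (by omega)]
    push_cast
    ring
  have hIio : ∀ j : Fin n, ∑ i, (if i < j then x j else 0) = (j : ℚ) * x j := fun j => by
    rw [← sum_filter, filter_gt_eq_Iio, sum_const, Fin.card_Iio, nsmul_eq_mul]
  simp only [hsplit, sum_sub_distrib, hIoi]
  rw [sum_comm (f := fun i j => if i < j then x j else 0)]
  simp only [hIio, ← sum_sub_distrib]
  exact sum_congr rfl fun i _ => by ring

theorem sum_weyl_mul_of_antitone {n : ℕ} {x : Fin n → ℚ} (hx : Antitone x) :
    ∑ i : Fin n, (((n : ℚ) - 1) / 2 - i) * x i = (∑ i, ∑ j, |x i - x j|) / 4 := by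
  have habs : ∀ i j, |x i - x j| =
      (if i < j then x i - x j else 0) + (if j < i then x j - x i else 0) := fun i j => by
    rcases lt_trichotomy i j with h | rfl | h
    · simp [h, h.not_gt, abs_of_nonneg (sub_nonneg.2 (hx h.le))]
    · simp
    · simp [h, h.not_gt, abs_of_nonpos (sub_nonpos.2 (hx h.le))]
  simp only [habs, sum_add_distrib]
  rw [sum_comm (f := fun i j => if j < i then x j - x i else 0), sum_sum_ite_lt_sub, ← two_mul,
    mul_sum, sum_div]
  exact sum_congr rfl fun i _ => by ring

theorem sum_weyl_sq (n : ℕ) :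
    ∑ i : Fin n, (((n : ℚ) - 1) / 2 - i) ^ 2 = n * ((n : ℚ) ^ 2 - 1) / 12 := by
  rw [Fin.sum_univ_eq_sum_range (fun c => (((n : ℚ) - 1) / 2 - c) ^ 2),
    ← sum_map_sl2Weights n (· ^ 2), sum_map_sq_sl2Weights]

theorem sum_sub_mul_sq {n : ℕ} (a x : Fin n → ℚ) (t : ℚ) :
    ∑ i, (a i - t * x i) ^ 2 = ∑ i, a i ^ 2 - 2 * t * ∑ i, a i * x i + t ^ 2 * ∑ i, x i ^ 2 := by
  simp only [mul_sum, ← sum_sub_distrib, ← sum_add_distrib]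
  exact sum_congr rfl fun i _ => by ring

theorem constraint_cases_of_rectangular {u q p : ℕ} (hu : 0 < u) (hq : 1 ≤ q) (hpn : q * u ≤ p)
    (h : (p : ℤ) * u * (q ^ 2 * u - 1) = q * u * ((q * u) ^ 2 - 1)) :
    u = 1 ∨ (q = 1 ∧ p = u + 1) := by
  rcases eq_or_ne u 1 with hu1 | hu1
  · exact Or.inl hu1
  right
  have hpn' : (q : ℤ) * u ≤ p := by exact_mod_cast hpn
  have hq' : (1 : ℤ) ≤ q := by exact_mod_cast hq
  have hu' : (2 : ℤ) ≤ u := by omega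
  -- after cancelling `u`, the excess `r = p - q u` satisfies `r (q² u - 1) = q (u - 1)`
  have hr : ((p : ℤ) - q * u) * (q ^ 2 * u - 1) = q * (u - 1) := by
    have : (u : ℤ) * (((p : ℤ) - q * u) * (q ^ 2 * u - 1) - q * (u - 1)) = 0 := by
      linear_combination h
    linarith [(mul_eq_zero.1 this).resolve_left (by omega)]
  have hr1 : (1 : ℤ) ≤ p - q * u := by
    rcases (sub_nonneg.2 hpn').eq_or_lt with h0 | h0
    · rw [← h0] at hr; nlinarith
    · omega
  have hq1 : q = 1 := by
    have hpos : (0 : ℤ) ≤ q ^ 2 * u - 1 := by nlinarith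
    have : (q : ℤ) ^ 2 * u - 1 ≤ q * (u - 1) := by
      nlinarith [mul_le_mul_of_nonneg_right hr1 hpos]
    have : (q : ℤ) ≤ 1 := by nlinarith
    omega
  subst hq1
  refine ⟨rfl, ?_⟩
  have : ((p : ℤ) - u - 1) * (u - 1) = 0 := by linear_combination hr
  have := (mul_eq_zero.1 this).resolve_right (by omega)
  omega

theorem constraint_cases_of_remainder_pos {u q s p : ℕ} (hq : 1 ≤ q) (hs : s < u) (hs0 : 0 < s)
    (hpn : q * u + s ≤ p)
    (h : (p : ℤ) * u * (q ^ 2 * u + 2 * q * s + s - 1) = (q * u + s) * ((q * u + s) ^ 2 - 1)) :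
    p = q * u + s ∧ (s = 1 ∨ s + 1 = u) := by
  have hpn' : (q : ℤ) * u + s ≤ p := by exact_mod_cast hpn
  have hq' : (1 : ℤ) ≤ q := by exact_mod_cast hq
  have hs' : (s : ℤ) + 1 ≤ u := by exact_mod_cast hs
  have hs0' : (1 : ℤ) ≤ s := by exact_mod_cast hs0
  -- `u (q² u + 2 q s + s - 1) = n² - 1 + (s - 1)(u - 1 - s)`, so both summands are `≥ 0`
  have hsplit : ((p : ℤ) - (q * u + s)) * ((q * u + s) ^ 2 - 1)
      + p * ((s - 1) * (u - 1 - s)) = 0 := by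
    linear_combination h
  have hn3 : (3 : ℤ) ≤ q * u + s := by nlinarith
  have h1 : 0 ≤ ((p : ℤ) - (q * u + s)) * ((q * u + s) ^ 2 - 1) :=
    mul_nonneg (by linarith) (by nlinarith)
  have h2 : 0 ≤ (p : ℤ) * ((s - 1) * (u - 1 - s)) :=
    mul_nonneg (by positivity) (mul_nonneg (by omega) (by omega))
  have hp : (p : ℤ) = q * u + s := by
    have := (mul_eq_zero.1 (show ((p : ℤ) - (q * u + s)) * ((q * u + s) ^ 2 - 1) = 0 by
      linarith)).resolve_right (by nlinarith)
    linarith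
  refine ⟨by exact_mod_cast hp, ?_⟩
  have : ((s : ℤ) - 1) * (u - 1 - s) = 0 :=
    (mul_eq_zero.1 (show (p : ℤ) * ((s - 1) * (u - 1 - s)) = 0 by linarith)).resolve_left
      (by omega)
  rcases mul_eq_zero.1 this with h | h <;> omega

/-- The formula multiplied by `12 u²`, after substituting the closed forms of `|x|²` and of
`6 ∑ |x_i - x_j| + dim g₀ - ½ dim g_{1/2}`. -/
theorem strange_identity {n u q s p : ℕ} (hun : u ≤ n) (hn : n = q * u + s) (hs : s < u)
    (hpn : n ≤ p) (h : p * u * (q ^ 2 * u + 2 * q * s + s - 1) = n * (n ^ 2 - 1)) :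
    (u : ℚ) ^ 2 * (n * (n ^ 2 - 1)) + p ^ 2 * (q * u * (u ^ 2 - 1) + s * (s ^ 2 - 1)) =
      p * u * (q ^ 2 * u * (2 * u ^ 2 - 1) + q * s * (3 * u ^ 2 + s ^ 2 - 2)
        + s * (2 * s ^ 2 - 1) - 1) := by
  have hq : 1 ≤ q := Nat.pos_of_ne_zero fun hq => by subst hq; omega
  have hqus : 1 ≤ q ^ 2 * u + 2 * q * s + s := by
    have := Nat.mul_pos (pow_pos hq 2) (show 0 < u by omega)
    omega
  have hℤ : (p : ℤ) * u * (q ^ 2 * u + 2 * q * s + s - 1) = n * (n ^ 2 - 1) := by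
    have := congrArg (Nat.cast : ℕ → ℤ) h
    push_cast [hqus, Nat.one_le_pow _ _ (show 0 < n by omega)] at this
    exact this
  subst hn
  push_cast at hℤ
  rcases Nat.eq_zero_or_pos s with rfl | hs0
  · rcases constraint_cases_of_rectangular hs hq (by simpa using hpn) (by simpa using hℤ)
      with rfl | ⟨rfl, rfl⟩
    · have : (p : ℚ) * (q ^ 2 - 1) = q * (q ^ 2 - 1) := by
        simpa using congrArg (Int.cast : ℤ → ℚ) hℤ
      push_cast
      linear_combination (-1 : ℚ) * this
    · push_cast; ring
  · obtain ⟨rfl, rfl | rfl⟩ := constraint_cases_of_remainder_pos hq hs hs0 hpn hℤ <;>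
      push_cast <;> ring

end StrangeFormula

open StrangeFormula in
/-- `x` lists the eigenvalues on `ℂⁿ` of the semisimple element of the `sl₂`-triple in decreasing
order and `ρ_i = (n-1)/2 - i`; `d0 + 1` and `d12` count the pairs of eigenvalues with difference
`0`, resp. `1/2`, the `+ 1` accounting for the trace condition of `sl_n`. -/
theorem stmt13_general (n u q s p : ℕ) (hun : u ≤ n) (hn : n = q * u + s) (hs : s < u)
    (hpn : n ≤ p)
    (x : Fin n → ℚ) (hxsort : Antitone x)
    (hxmult : ∀ v : ℚ,
      (Finset.univ.filter fun i => x i = v).card =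
        q * (if ∃ c : ℕ, c < u ∧ v = ((u : ℚ) - 1) / 2 - c then 1 else 0) +
          (if ∃ c : ℕ, c < s ∧ v = ((s : ℚ) - 1) / 2 - c then 1 else 0))
    (d0 d12 : ℕ)
    (hd0 : d0 + 1 = (Finset.univ.filter fun ij : Fin n × Fin n => x ij.1 = x ij.2).card)
    (hd12 : d12 = (Finset.univ.filter fun ij : Fin n × Fin n => x ij.1 - x ij.2 = 1/2).card)
    (hconstraint : p * u * (d0 + d12) = n * (n ^ 2 - 1)) :
    ∑ i : Fin n, (((n : ℚ) - 1) / 2 - ((i : ℕ) : ℚ) - ((p : ℚ) / u) * x i) ^ 2 =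
      (1 / 12) * ((p : ℚ) / u) * ((d0 : ℚ) - (d12 : ℚ) / 2) := by
  have hW := map_univ_eq_of_card_filter x hxmult
  have hφ := sum_sum_strangeKernel_eq_abs_add_card x
  have hψ := sum_sum_centralizerKernel_eq_card x
  rw [sum_sum_strangeKernel_of_map_univ_eq hW hs.le, ← hd0, ← hd12] at hφ
  rw [sum_sum_centralizerKernel_of_map_univ_eq hW hs.le, ← hd0, ← hd12] at hψ
  have hdim : d0 + 1 + d12 = q ^ 2 * u + 2 * q * s + s := by exact_mod_cast hψ.symm
  have hid := strange_identity hun hn hs hpn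
    (by rwa [show d0 + d12 = q ^ 2 * u + 2 * q * s + s - 1 by omega] at hconstraint)
  rw [sum_sub_mul_sq, sum_weyl_sq, sum_weyl_mul_of_antitone hxsort, sum_sq_of_map_univ_eq hW]
  have hu₀ : (u : ℚ) ≠ 0 := Nat.cast_ne_zero.2 (by omega)
  push_cast at hφ
  field_simp
  linear_combination 8 * hid + 8 * u * p * hφ

/-- The "strange formula" generalization (Remark 2.2 of Kac–Wakimoto) for `g = sl_n` and
`f = f_u` with partition `n = u + ⋯ + u + s` (`q` parts `u`, `0 ≤ s < u`): here
`x : Fin n → ℚ` is the (sorted) semisimple element of an `sl₂`-triple through `f_u`,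
whose multiset of values consists of `q` copies of `(u-1)/2 - c` (`0 ≤ c < u`) and one
copy of `(s-1)/2 - c` (`0 ≤ c < s`); `ρ_i = (n-1)/2 - i` is the Weyl vector;
`d0 = dim g₀ = #{(i,j) : x_i = x_j} - 1` and `d12 = dim g_{1/2} = #{(i,j) : x_i - x_j = 1/2}`.
Under the constraint `p·u·dim g^{f_u} = h^∨·dim g = n(n²-1)` with `p ≥ n`, `gcd(p,u) = 1`:
`|ρ - (p/u)x|² = (1/12)(p/u)(dim g₀ - (1/2) dim g_{1/2})`. -/
theorem stmt13 (n u q s p : ℕ) (hu : 0 < u) (hun : u ≤ n) (hn : n = q * u + s) (hs : s < u)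
    (hpn : n ≤ p) (hpu : Nat.Coprime p u)
    (x : Fin n → ℚ) (hxsort : Antitone x)
    (hxmult : ∀ v : ℚ,
      (Finset.univ.filter fun i => x i = v).card =
        q * (if ∃ c : ℕ, c < u ∧ v = ((u : ℚ) - 1) / 2 - c then 1 else 0) +
          (if ∃ c : ℕ, c < s ∧ v = ((s : ℚ) - 1) / 2 - c then 1 else 0))
    (d0 d12 : ℕ)
    (hd0 : d0 + 1 = (Finset.univ.filter fun ij : Fin n × Fin n => x ij.1 = x ij.2).card)
    (hd12 : d12 = (Finset.univ.filter fun ij : Fin n × Fin n => x ij.1 - x ij.2 = 1/2).card)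
    (hconstraint : p * u * (d0 + d12) = n * (n ^ 2 - 1)) :
    ∑ i : Fin n, (((n : ℚ) - 1) / 2 - ((i : ℕ) : ℚ) - ((p : ℚ) / u) * x i) ^ 2 =
      (1 / 12) * ((p : ℚ) / u) * ((d0 : ℚ) - (d12 : ℚ) / 2) :=
  stmt13_general n u q s p hun hn hs hpn x hxsort hxmult d0 d12 hd0 hd12 hconstraint
end

section
/- Let λ = kD with k + h^∨ = p/u, p, u ∈ ℕ, gcd(p,u) = 1, gcd(u, ℓ) = 1. Then the set of affine coroots α^∨ + nK (α ∈ Δ, n ∈ ℤ) on which λ + ρ̂ takes integer values is exactly {α^∨ + nuK : α long} ∪ {α^∨ + nℓuK : α short} ∪ {nuK : n ≠ 0}, and the condition that (λ + ρ̂ | α^∨) ∈ ℕ for all such positive coroots is equivalent to p ≥ h^∨. -/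
/-!
The value of `λ + ρ̂` on `α^∨ + nK` is `n·p/u + (ρ|α^∨)`. As `p` and `u` are coprime it is an
integer exactly when `u ∣ n`; for short roots `ℓ ∣ n` already holds, and coprimality of `ℓ` and
`u` turns this into `ℓu ∣ n`. A positive integral coroot has either `n = 0` and value
`(ρ|α^∨) ≥ 1`, or `n ≥ u` and value `≥ p - (h^∨ - 1)`; the latter bound is attained at
`uK - θ^∨`, so all these values are positive exactly when `p ≥ h^∨`.
-/

theorem exists_int_eq_mul_div_add_iff_dvd {p u : ℕ} (hu : 0 < u) (hpu : p.Coprime u)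
    (n c : ℤ) : (∃ z : ℤ, (n : ℚ) * ((p : ℚ) / u) + c = z) ↔ (u : ℤ) ∣ n := by
  have huQ : (u : ℚ) ≠ 0 := by exact_mod_cast hu.ne'
  constructor
  · rintro ⟨z, hz⟩
    have hnp : n * p = (z - c) * u := by
      have : (n : ℚ) * p = (z - c) * u := by
        field_simp at hz
        linarith
      exact_mod_cast this
    exact (Nat.isCoprime_iff_coprime.mpr hpu.symm).dvd_of_dvd_mul_right
      ⟨z - c, by rw [hnp, mul_comm]⟩
  · rintro ⟨m, rfl⟩
    exact ⟨m * p + c, by push_cast; field_simp⟩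

theorem IsCoprime.dvd_iff_mul_dvd {R : Type*} [CommSemiring R] {a b n : R}
    (hab : IsCoprime a b) (ha : a ∣ n) : b ∣ n ↔ a * b ∣ n :=
  ⟨hab.mul_dvd ha, dvd_of_mul_left_dvd⟩

theorem natCast_le_mul_div_of_dvd {p u : ℕ} {n : ℤ} (hn : 0 < n) (hun : (u : ℤ) ∣ n) :
    (p : ℚ) ≤ n * ((p : ℚ) / u) := by
  obtain ⟨m, rfl⟩ := hun
  have hu : (u : ℚ) ≠ 0 := by exact_mod_cast left_ne_zero_of_mul hn.ne'
  have hm : (1 : ℚ) ≤ m := by exact_mod_cast pos_of_mul_pos_right hn (Int.natCast_nonneg u)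
  calc (p : ℚ) ≤ m * p := le_mul_of_one_le_left (Nat.cast_nonneg p) hm
    _ = ((u * m : ℤ) : ℚ) * ((p : ℚ) / u) := by push_cast; field_simp

theorem stmt16_general {Δ : Type*} (islong : Δ → Prop) (posR : Δ → Prop) (negR : Δ → Δ)
    (r : Δ → ℤ) (hneg_r : ∀ α, r (negR α) = -r α)
    (hneg_long : ∀ α, islong (negR α) ↔ islong α)
    (hv ℓ p u : ℕ) (hu : 0 < u)
    (hpu : Nat.Coprime p u) (huℓ : Nat.Coprime u ℓ)
    (hrb' : ∀ α, -((hv : ℤ) - 1) ≤ r α)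
    (hrpos : ∀ α, posR α → 1 ≤ r α)
    (θ : Δ) (hθlong : islong θ) (hθr : r θ = (hv : ℤ) - 1) :
    (∀ α : Δ, ∀ n : ℤ, (islong α ∨ (ℓ : ℤ) ∣ n) →
        ((∃ z : ℤ, (n : ℚ) * ((p : ℚ) / u) + (r α : ℚ) = z) ↔
          ((islong α ∧ (u : ℤ) ∣ n) ∨ (¬ islong α ∧ ((ℓ * u : ℕ) : ℤ) ∣ n))))
    ∧ (∀ n : ℤ, n ≠ 0 → ((∃ z : ℤ, (n : ℚ) * ((p : ℚ) / u) = z) ↔ (u : ℤ) ∣ n))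
    ∧ ((∀ α : Δ, ∀ n : ℤ, (islong α ∨ (ℓ : ℤ) ∣ n) →
          (0 < n ∨ (n = 0 ∧ posR α)) →
          (∃ z : ℤ, (n : ℚ) * ((p : ℚ) / u) + (r α : ℚ) = z) →
          1 ≤ (n : ℚ) * ((p : ℚ) / u) + (r α : ℚ))
        ↔ hv ≤ p) := by
  have integral_iff := exists_int_eq_mul_div_add_iff_dvd hu hpu
  refine ⟨fun α n hmem => ?_, fun n _ => by simpa using integral_iff n 0, ?_⟩
  · rw [integral_iff]
    by_cases hl : islong α
    · simp [hl]
    · rw [Nat.cast_mul, ← (Nat.isCoprime_iff_coprime.mpr huℓ.symm).dvd_iff_mul_dvd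
        (hmem.resolve_left hl)]
      simp [hl]
  constructor
  · intro hpos
    have h := hpos (negR θ) u (Or.inl ((hneg_long θ).mpr hθlong)) (Or.inl (by omega))
      ((integral_iff u _).mpr dvd_rfl)
    have hu' : (u : ℚ) ≠ 0 := by positivity
    rw [hneg_r, hθr] at h
    push_cast at h
    rw [mul_div_cancel₀ _ hu'] at h
    exact_mod_cast (by linarith : (hv : ℚ) ≤ p)
  · rintro hle α n - (hn | ⟨rfl, hα⟩) hint
    · have := natCast_le_mul_div_of_dvd (p := p) hn ((integral_iff n (r α)).mp hint)
      have : (hv : ℚ) ≤ p := by exact_mod_cast hle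
      have : -((hv : ℚ) - 1) ≤ r α := by exact_mod_cast hrb' α
      linarith
    · simpa using (Int.cast_le (R := ℚ)).mpr (hrpos α hα)

/-- Proposition 1.1, case (i), of Kac–Wakimoto, in an abstract form.  Data: a finite root
system `Δ` with a long/short classification `islong`, positivity `posR`, negation `negR`,
and integer pairing `r α = (ρ | α^∨)` satisfying the standard properties (`r θ = h^∨ - 1`
at the highest root `θ`, `|r α| ≤ h^∨ - 1`, `r α ≥ 1` for positive `α`).  The affine real
coroots are `α^∨ + nK` with `n ∈ ℤ` for `α` long and `n ∈ ℓℤ` for `α` short, and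
`(λ + ρ̂ | α^∨ + nK) = n(k + h^∨) + (ρ|α^∨) = n·p/u + r α` for `λ = kD`, `k + h^∨ = p/u`.
Then: (1) such a coroot takes an integer value iff `u ∣ n` (`α` long) or `ℓu ∣ n` (`α`
short); (2) an imaginary coroot `nK` (`n ≠ 0`) takes an integer value iff `u ∣ n`;
(3) the condition `(λ + ρ̂ | α^∨) ∈ ℕ` for all positive coroots in this set is equivalent
to `p ≥ h^∨`. -/
theorem stmt16 {Δ : Type*} (islong : Δ → Prop) (posR : Δ → Prop) (negR : Δ → Δ)
    (r : Δ → ℤ) (hneg_r : ∀ α, r (negR α) = -r α)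
    (hneg_long : ∀ α, islong (negR α) ↔ islong α)
    (hneg_pos : ∀ α, posR α ↔ ¬ posR (negR α))
    (hv ℓ p u : ℕ) (hh : 2 ≤ hv) (hℓ : 0 < ℓ) (hp : 0 < p) (hu : 0 < u)
    (hpu : Nat.Coprime p u) (huℓ : Nat.Coprime u ℓ)
    (hrb : ∀ α, r α ≤ (hv : ℤ) - 1) (hrb' : ∀ α, -((hv : ℤ) - 1) ≤ r α)
    (hrpos : ∀ α, posR α → 1 ≤ r α)
    (θ : Δ) (hθlong : islong θ) (hθpos : posR θ) (hθr : r θ = (hv : ℤ) - 1)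
    (k : ℚ) (hk : k + (hv : ℚ) = (p : ℚ) / u) :
    (∀ α : Δ, ∀ n : ℤ, (islong α ∨ (ℓ : ℤ) ∣ n) →
        ((∃ z : ℤ, (n : ℚ) * ((p : ℚ) / u) + (r α : ℚ) = z) ↔
          ((islong α ∧ (u : ℤ) ∣ n) ∨ (¬ islong α ∧ ((ℓ * u : ℕ) : ℤ) ∣ n))))
    ∧ (∀ n : ℤ, n ≠ 0 → ((∃ z : ℤ, (n : ℚ) * ((p : ℚ) / u) = z) ↔ (u : ℤ) ∣ n))
    ∧ ((∀ α : Δ, ∀ n : ℤ, (islong α ∨ (ℓ : ℤ) ∣ n) →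
          (0 < n ∨ (n = 0 ∧ posR α)) →
          (∃ z : ℤ, (n : ℚ) * ((p : ℚ) / u) + (r α : ℚ) = z) →
          1 ≤ (n : ℚ) * ((p : ℚ) / u) + (r α : ℚ))
        ↔ hv ≤ p) :=
  stmt16_general islong posR negR r hneg_r hneg_long hv ℓ p u hu hpu huℓ hrb' hrpos θ hθlong hθr
end
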